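/- arXiv:2503.15408 — 5 statements merged into one kernel-verified Lean document; each statement's English description precedes it below -/
import Mathlib

section
/- Let p be an odd prime and G = E_p(p^3). A subgroup H of G satisfies ⋂_{σ ∈ G} σ⁻¹Hσ = {1} if and only if H = {1} or H is cyclic of order p with H ≠ Z(G). -/
/-- The Heisenberg group `G = E_p(p³) = ⟨a,b,c ∣ aᵖ = bᵖ = cᵖ = 1, [b,a] = c, [c,a] = [c,b] = 1⟩`
(the extraspecial group of order `p³` and exponent `p`, for odd `p`): every element has a
unique normal form `a^s b^t c^u`, and we encode it as the triple `(s, t, u)`; the relations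
give `b^t a^s = a^s b^t c^{t s}`, whence the multiplication rule below. -/
@[ext] structure Heis (p : ℕ) where
  s : ZMod p
  t : ZMod p
  u : ZMod p

namespace Heis

variable {p : ℕ}

instance : Group (Heis p) where
  mul x y := ⟨x.s + y.s, x.t + y.t, x.u + y.u + x.t * y.s⟩
  one := ⟨0, 0, 0⟩
  inv x := ⟨-x.s, -x.t, -x.u + x.t * x.s⟩
  mul_assoc x y z := by
    refine Heis.ext (add_assoc _ _ _) (add_assoc _ _ _) ?_
    show x.u + y.u + x.t * y.s + z.u + (x.t + y.t) * z.s
       = x.u + (y.u + z.u + y.t * z.s) + x.t * (y.s + z.s)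
    ring
  one_mul x := by
    refine Heis.ext (zero_add _) (zero_add _) ?_
    show 0 + x.u + 0 * x.s = x.u; ring
  mul_one x := by
    refine Heis.ext (add_zero _) (add_zero _) ?_
    show x.u + 0 + x.t * 0 = x.u; ring
  inv_mul_cancel x := by
    refine Heis.ext (neg_add_cancel _) (neg_add_cancel _) ?_
    show -x.u + x.t * x.s + x.u + -x.t * x.s = 0; ring

@[simp] lemma mul_def (x y : Heis p) :
    x * y = ⟨x.s + y.s, x.t + y.t, x.u + y.u + x.t * y.s⟩ := rfl

@[simp] lemma one_def : (1 : Heis p) = ⟨0, 0, 0⟩ := rfl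

@[simp] lemma inv_def (x : Heis p) : x⁻¹ = ⟨-x.s, -x.t, -x.u + x.t * x.s⟩ := rfl

/-- The generator `a`. -/
def a : Heis p := ⟨1, 0, 0⟩
/-- The generator `b`. -/
def b : Heis p := ⟨0, 1, 0⟩
/-- The generator `c = [b,a] = b⁻¹a⁻¹ba`. -/
def c : Heis p := ⟨0, 0, 1⟩

lemma c_eq_commutator : (c : Heis p) = b⁻¹ * a⁻¹ * b * a := by
  simp [a, b, c]

end Heis


section Aux

namespace Heis

variable {p : ℕ}

lemma commutator_eq (g x : Heis p) :
    g * x * g⁻¹ * x⁻¹ = ⟨0, 0, g.t * x.s - x.t * g.s⟩ := by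
  refine Heis.ext ?_ ?_ ?_ <;> simp <;> ring

lemma pow_uc (v : ZMod p) (n : ℕ) :
    (⟨0, 0, v⟩ : Heis p) ^ n = ⟨0, 0, (n : ZMod p) * v⟩ := by
  induction n with
  | zero => simp [pow_zero]
  | succ n ih =>
    rw [pow_succ, ih]
    refine Heis.ext (by simp) (by simp) ?_
    push_cast
    show (n : ZMod p) * v + v + 0 * 0 = ((n : ZMod p) + 1) * v
    ring

/-- The equivalence with the product type, to get finiteness. -/
def toProd : Heis p ≃ (ZMod p × ZMod p × ZMod p) where
  toFun x := (x.s, x.t, x.u)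
  invFun y := ⟨y.1, y.2.1, y.2.2⟩
  left_inv x := rfl
  right_inv y := rfl

instance [NeZero p] : Finite (Heis p) := Finite.of_equiv _ toProd.symm

variable [Fact p.Prime]

lemma c_ne_one : (c : Heis p) ≠ 1 := by
  intro h
  have h1 : (1 : ZMod p) = 0 := congrArg Heis.u h
  exact one_ne_zero h1

lemma c_mem_of_uc {H : Subgroup (Heis p)} {v : ZMod p} (hv : v ≠ 0)
    (h : (⟨0, 0, v⟩ : Heis p) ∈ H) : c ∈ H := by
  have hm := H.pow_mem h (v⁻¹.val)
  rwa [pow_uc, ZMod.natCast_val, ZMod.cast_id, inv_mul_cancel₀ hv] at hm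

lemma mem_center_iff {x : Heis p} :
    x ∈ Subgroup.center (Heis p) ↔ x.s = 0 ∧ x.t = 0 := by
  rw [Subgroup.mem_center_iff]
  constructor
  · intro h
    have ha := congrArg Heis.u (h a)
    have hb := congrArg Heis.u (h b)
    simp only [mul_def, a, b] at ha hb
    exact ⟨by linear_combination hb, by linear_combination -ha⟩
  · rintro ⟨hs, ht⟩ g
    refine Heis.ext (add_comm _ _) (add_comm _ _) ?_
    show g.u + x.u + g.t * x.s = x.u + g.u + x.t * g.s
    rw [hs, ht]; ring

lemma center_eq : Subgroup.center (Heis p) = Subgroup.zpowers c := by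
  ext x
  rw [mem_center_iff, Subgroup.mem_zpowers_iff]
  constructor
  · rintro ⟨hs, ht⟩
    refine ⟨(x.u.val : ℤ), ?_⟩
    rw [zpow_natCast]
    show (⟨0, 0, 1⟩ : Heis p) ^ x.u.val = x
    rw [pow_uc, mul_one, ZMod.natCast_val, ZMod.cast_id]
    exact Heis.ext hs.symm ht.symm rfl
  · rintro ⟨k, rfl⟩
    have key : ∀ n : ℕ, ((c : Heis p) ^ n).s = 0 ∧ ((c : Heis p) ^ n).t = 0 := by
      intro n
      rw [show (c : Heis p) = ⟨0, 0, 1⟩ from rfl, pow_uc]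
      exact ⟨rfl, rfl⟩
    rcases k.eq_nat_or_neg with ⟨n, rfl | rfl⟩
    · rw [zpow_natCast]; exact key n
    · rw [zpow_neg, zpow_natCast]
      obtain ⟨h1, h2⟩ := key n
      constructor <;> simp [h1, h2]

lemma orderOf_c : orderOf (c : Heis p) = p := by
  refine orderOf_eq_prime ?_ c_ne_one
  show (⟨0, 0, 1⟩ : Heis p) ^ p = 1
  rw [pow_uc]
  simp

/-- Any nontrivial normal subgroup contains `c`. -/
lemma c_mem_of_normal (N : Subgroup (Heis p)) (hN : N.Normal) (h : N ≠ ⊥) : c ∈ N := by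
  obtain ⟨x, hx1⟩ := Subgroup.ne_bot_iff_exists_ne_one.mp h
  by_cases hs : (x : Heis p).s ≠ 0
  · have hb : b * (x : Heis p) * b⁻¹ * (x : Heis p)⁻¹ ∈ N :=
      N.mul_mem (hN.conj_mem _ x.2 b) (N.inv_mem x.2)
    rw [commutator_eq] at hb
    refine c_mem_of_uc ?_ hb
    simpa [b] using hs
  · push_neg at hs
    by_cases ht : (x : Heis p).t ≠ 0
    · have ha : a * (x : Heis p) * a⁻¹ * (x : Heis p)⁻¹ ∈ N :=
        N.mul_mem (hN.conj_mem _ x.2 a) (N.inv_mem x.2)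
      rw [commutator_eq] at ha
      refine c_mem_of_uc ?_ ha
      simpa [a] using ht
    · push_neg at ht
      have hu : (x : Heis p).u ≠ 0 := by
        intro hu
        exact hx1 (Subtype.ext (Heis.ext hs ht hu))
      have hmem : (⟨0, 0, (x : Heis p).u⟩ : Heis p) ∈ N := by
        have hx : (x : Heis p) = ⟨0, 0, (x : Heis p).u⟩ := Heis.ext hs ht rfl
        exact hx ▸ x.2
      exact c_mem_of_uc hu hmem

/-- The abelianization map. -/
def phi : Heis p →* Multiplicative (ZMod p × ZMod p) where
  toFun x := Multiplicative.ofAdd (x.s, x.t)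
  map_one' := rfl
  map_mul' x y := rfl

end Heis

end Aux

/-- For an odd prime `p` and `G = E_p(p³)`, a subgroup `H ≤ G` satisfies
`⋂_{σ ∈ G} σ⁻¹Hσ = {1}` (i.e. its normal core is trivial) if and only if `H = {1}` or `H` is
cyclic of order `p` with `H ≠ Z(G)`. -/
theorem normalCore_trivial_iff (p : ℕ) (hp : p.Prime) (hodd : Odd p) (H : Subgroup (Heis p)) :
    H.normalCore = ⊥ ↔
      H = ⊥ ∨ (IsCyclic H ∧ Nat.card H = p ∧ H ≠ Subgroup.center (Heis p)) := by
  haveI : Fact p.Prime := ⟨hp⟩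
  haveI : NeZero p := ⟨hp.pos.ne'⟩
  have key : H.normalCore = ⊥ ↔ Heis.c ∉ H := by
    constructor
    · intro hcore hc
      have hzle : Subgroup.center (Heis p) ≤ H := by
        rw [Heis.center_eq]; exact Subgroup.zpowers_le.mpr hc
      have h2 := Subgroup.normal_le_normalCore.mpr hzle
      rw [hcore, le_bot_iff] at h2
      have h3 : Heis.c ∈ Subgroup.center (Heis p) := by
        rw [Heis.center_eq]; exact Subgroup.mem_zpowers _
      rw [h2] at h3
      exact Heis.c_ne_one h3
    · intro hc
      by_contra hcore
      exact hc (H.normalCore_le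
        (Heis.c_mem_of_normal _ (Subgroup.normalCore_normal H) hcore))
  rw [key]
  constructor
  · intro hc
    by_cases hbot : H = ⊥
    · exact Or.inl hbot
    right
    set f := Heis.phi.comp H.subtype with hf
    have hinj : Function.Injective f := by
      rw [injective_iff_map_eq_one]
      intro x hx
      have hx' : ((x : Heis p).s, (x : Heis p).t) = ((0 : ZMod p), (0 : ZMod p)) :=
        Multiplicative.ofAdd.injective hx
      have hs : (x : Heis p).s = 0 := congrArg Prod.fst hx'
      have ht : (x : Heis p).t = 0 := congrArg Prod.snd hx'
      by_cases hu : (x : Heis p).u = 0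
      · exact Subtype.ext (Heis.ext hs ht hu)
      · exfalso
        refine hc (Heis.c_mem_of_uc hu ?_)
        have hxe : (x : Heis p) = ⟨0, 0, (x : Heis p).u⟩ := Heis.ext hs ht rfl
        exact hxe ▸ x.2
    have hcard : Nat.card H = Nat.card f.range :=
      (Nat.card_range_of_injective hinj).symm
    have hcardM : Nat.card (Multiplicative (ZMod p × ZMod p)) = p ^ 2 := by
      show Nat.card (ZMod p × ZMod p) = p ^ 2
      rw [Nat.card_prod, Nat.card_zmod, sq]
    have hdvd : Nat.card f.range ∣ p ^ 2 := by
      have h := Subgroup.card_subgroup_dvd_card f.range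
      rwa [hcardM] at h
    obtain ⟨k, hk2, hkeq⟩ := (Nat.dvd_prime_pow hp).mp hdvd
    interval_cases k
    · exfalso
      rw [pow_zero] at hkeq
      rw [← hcard] at hkeq
      exact hbot (Subgroup.card_eq_one.mp hkeq)
    · rw [pow_one] at hkeq
      rw [hkeq] at hcard
      refine ⟨isCyclic_of_prime_card hcard, hcard, ?_⟩
      intro hEq
      apply hc
      rw [hEq, Heis.center_eq]
      exact Subgroup.mem_zpowers _
    · exfalso
      have htop : f.range = ⊤ := by
        apply Subgroup.eq_top_of_card_eq
        rw [hkeq, hcardM]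
      have hx : Multiplicative.ofAdd ((1 : ZMod p), (0 : ZMod p)) ∈ f.range :=
        htop ▸ Subgroup.mem_top _
      have hy : Multiplicative.ofAdd ((0 : ZMod p), (1 : ZMod p)) ∈ f.range :=
        htop ▸ Subgroup.mem_top _
      obtain ⟨x, hxv⟩ := hx
      obtain ⟨y, hyv⟩ := hy
      have hxv' : ((x : Heis p).s, (x : Heis p).t) = ((1 : ZMod p), (0 : ZMod p)) :=
        Multiplicative.ofAdd.injective hxv
      have hyv' : ((y : Heis p).s, (y : Heis p).t) = ((0 : ZMod p), (1 : ZMod p)) :=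
        Multiplicative.ofAdd.injective hyv
      have hxs : (x : Heis p).s = 1 := congrArg Prod.fst hxv'
      have hxt : (x : Heis p).t = 0 := congrArg Prod.snd hxv'
      have hys : (y : Heis p).s = 0 := congrArg Prod.fst hyv'
      have hyt : (y : Heis p).t = 1 := congrArg Prod.snd hyv'
      have hmem : (y : Heis p) * x * (y : Heis p)⁻¹ * (x : Heis p)⁻¹ ∈ H :=
        H.mul_mem (H.mul_mem (H.mul_mem y.2 x.2) (H.inv_mem y.2)) (H.inv_mem x.2)
      rw [Heis.commutator_eq, hxs, hxt, hys, hyt] at hmem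
      apply hc
      refine Heis.c_mem_of_uc one_ne_zero ?_
      simpa using hmem
  · rintro (rfl | ⟨hcyc, hcard, hne⟩)
    · intro hc
      exact Heis.c_ne_one hc
    · intro hc
      apply hne
      have hle : Subgroup.center (Heis p) ≤ H := by
        rw [Heis.center_eq]
        exact Subgroup.zpowers_le.mpr hc
      have hcc : Nat.card (Subgroup.center (Heis p)) = p := by
        rw [Heis.center_eq, Nat.card_zpowers, Heis.orderOf_c]
      exact (Subgroup.eq_of_le_of_card_ge hle (by rw [hcard, hcc])).symm
end

section
/- Let p be an odd prime and G = E_p(p^3). The map f₁ : G × G → Q/Z given by f₁(a^{s₁}b^{t₁}c^{u₁}, a^{s₂}b^{t₂}c^{u₂}) = (u₁s₂ + t₁·s₂(s₂−1)/2)/p mod Z is a 2-cocycle on G with values in Q/Z (with trivial G-action). -/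
/-- The group `ℚ/ℤ` (realized as `AddCircle (1 : ℚ) = ℚ ⧸ ℤ`). -/
abbrev QZ := AddCircle (1 : ℚ)

namespace Heis

/-- The 2-cocycle `f₁` on `G = E_p(p³)` with values in `ℚ/ℤ` (trivial action):
`f₁(a^{s₁}b^{t₁}c^{u₁}, a^{s₂}b^{t₂}c^{u₂}) = (u₁s₂ + t₁·s₂(s₂−1)/2)/p mod ℤ`. -/
noncomputable def f₁ (p : ℕ) (g h : Heis p) : QZ :=
  (((g.u.val * h.s.val + g.t.val * (h.s.val * (h.s.val - 1) / 2) : ℕ) : ℚ) / (p : ℚ) : QZ)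

/-- The 2-cocycle `f₂` on `G = E_p(p³)` with values in `ℚ/ℤ` (trivial action):
`f₂(a^{s₁}b^{t₁}c^{u₁}, a^{s₂}b^{t₂}c^{u₂}) = (t₁(t₁−1)/2·s₂ + (t₁s₂ + u₁)t₂)/p mod ℤ`. -/
noncomputable def f₂ (p : ℕ) (g h : Heis p) : QZ :=
  (((g.t.val * (g.t.val - 1) / 2 * h.s.val + (g.t.val * h.s.val + g.u.val) * h.t.val : ℕ) : ℚ)
    / (p : ℚ) : QZ)

end Heis

/-- `f : K × K → A` is a 2-cocycle for the trivial action of the group `K` on the abelian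
group `A`: `f(g₁,g₂) + f(g₁g₂,g₃) = f(g₂,g₃) + f(g₁,g₂g₃)`. -/
def IsTwoCocycle {K : Type*} [Group K] {A : Type*} [AddCommGroup A] (f : K → K → A) : Prop :=
  ∀ g₁ g₂ g₃ : K, f g₁ g₂ + f (g₁ * g₂) g₃ = f g₂ g₃ + f g₁ (g₂ * g₃)

/-- `f : K × K → A` is a 2-coboundary for the trivial action of the group `K` on the abelian
group `A`: `f(g,h) = φ(h) − φ(gh) + φ(g)` for some `φ : K → A`. -/
def IsTwoCoboundary {K : Type*} [Group K] {A : Type*} [AddCommGroup A] (f : K → K → A) : Prop :=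
  ∃ φ : K → A, ∀ g h : K, f g h = φ h - φ (g * h) + φ g

lemma IsTwoCocycle.comp_addMonoidHom {K A B : Type*} [Group K] [AddCommGroup A]
    [AddCommGroup B] {f : K → K → A} (hf : IsTwoCocycle f) (φ : A →+ B) :
    IsTwoCocycle (fun g h => φ (f g h)) := by
  intro g₁ g₂ g₃
  simp only [← map_add, hf g₁ g₂ g₃]

lemma Nat.two_mul_cast_choose_two {R : Type*} [CommRing R] (n : ℕ) :
    2 * (n.choose 2 : R) = n * (n - 1) := by
  rw [← Nat.cast_descFactorial_two, Nat.descFactorial_eq_factorial_mul_choose]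
  push_cast [Nat.factorial_two]
  rfl

namespace ZMod

variable {p : ℕ}

noncomputable def toQZ [NeZero p] : ZMod p →+ QZ :=
  lift p ⟨AddMonoidHom.mk' (fun j ↦ ((j / p : ℚ) : QZ)) (by simp [add_div]),
    by simp⟩

lemma toQZ_natCast [NeZero p] (n : ℕ) : toQZ (n : ZMod p) = ((n / p : ℚ) : QZ) := by
  rw [← Int.cast_natCast, toQZ, lift_coe]
  simp

lemma natCast_val_add_choose_two (hp : Odd p) (x y : ZMod p) :
    ((x + y).val.choose 2 : ZMod p) = (x.val.choose 2 : ℕ) + (y.val.choose 2 : ℕ) + x * y := by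
  have : NeZero p := ⟨hp.pos.ne'⟩
  have h2 : IsUnit (2 : ZMod p) := by
    exact_mod_cast (isUnit_iff_coprime 2 p).mpr hp.coprime_two_left
  refine h2.mul_left_cancel ?_
  simp only [mul_add, Nat.two_mul_cast_choose_two, natCast_zmod_val]
  ring

end ZMod

namespace Heis

variable {p : ℕ}

def f₁ZMod (g h : Heis p) : ZMod p := g.u * h.s + g.t * (h.s.val.choose 2 : ℕ)

lemma f₁ZMod_isTwoCocycle (hp : Odd p) : IsTwoCocycle (f₁ZMod (p := p)) := by
  intro g₁ g₂ g₃
  simp only [f₁ZMod, mul_def, ZMod.natCast_val_add_choose_two hp]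
  ring

lemma f₁_eq_toQZ_f₁ZMod [NeZero p] (g h : Heis p) : f₁ p g h = ZMod.toQZ (f₁ZMod g h) := by
  rw [f₁, ← Nat.choose_two_right, ← ZMod.toQZ_natCast, f₁ZMod]
  push_cast [ZMod.natCast_zmod_val]
  rfl

end Heis

theorem f₁_isTwoCocycle_general (p : ℕ) (hodd : Odd p) :
    IsTwoCocycle (Heis.f₁ p) := by
  have : NeZero p := ⟨hodd.pos.ne'⟩
  have := (Heis.f₁ZMod_isTwoCocycle hodd).comp_addMonoidHom ZMod.toQZ
  simpa only [← Heis.f₁_eq_toQZ_f₁ZMod] using this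

/-- For an odd prime `p` and `G = E_p(p³)`, the map
`f₁(a^{s₁}b^{t₁}c^{u₁}, a^{s₂}b^{t₂}c^{u₂}) = (u₁s₂ + t₁·s₂(s₂−1)/2)/p mod ℤ`
is a 2-cocycle on `G` with values in `ℚ/ℤ` (trivial `G`-action). -/
theorem f₁_isTwoCocycle (p : ℕ) (hp : p.Prime) (hodd : Odd p) :
    IsTwoCocycle (Heis.f₁ p) :=
  f₁_isTwoCocycle_general p hodd
end

section
/- Let p be an odd prime and G = E_p(p^3). The map f₂ : G × G → Q/Z given by f₂(a^{s₁}b^{t₁}c^{u₁}, a^{s₂}b^{t₂}c^{u₂}) = (t₁(t₁−1)/2·s₂ + (t₁s₂ + u₁)t₂)/p mod Z is a 2-cocycle on G with values in Q/Z (with trivial G-action). -/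
namespace Heis

lemma intCast_coe_zero (n : ℤ) : ((n : ℚ) : QZ) = 0 := by
  rw [AddCircle.coe_eq_zero_iff]; exact ⟨n, by simp⟩

/-- The map `ZMod p → ℚ/ℤ`, `x ↦ x.val / p`. -/
noncomputable def qmap (p : ℕ) (x : ZMod p) : QZ := ((x.val : ℚ) / p : ℚ)

lemma qmap_nat (p : ℕ) [NeZero p] (n : ℕ) : qmap p (n : ZMod p) = (((n:ℚ)/p : ℚ) : QZ) := by
  unfold qmap
  rw [ZMod.val_natCast]
  have h : (n : ℚ) = ((n % p : ℕ) : ℚ) + ((n / p : ℕ) : ℚ) * p :=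
    mod_cast congrArg (Nat.cast : ℕ → ℚ) (Nat.mod_add_div' n p).symm
  have hp : (p:ℚ) ≠ 0 := Nat.cast_ne_zero.2 (NeZero.ne p)
  rw [h, add_div, mul_div_assoc, div_self hp, mul_one, AddCircle.coe_add]
  have : (((n/p : ℕ):ℚ) : QZ) = 0 := mod_cast intCast_coe_zero (n/p : ℕ)
  rw [this, add_zero]

lemma qmap_add (p : ℕ) [NeZero p] (x y : ZMod p) : qmap p (x + y) = qmap p x + qmap p y := by
  have h := qmap_nat p (x.val + y.val)
  rw [Nat.cast_add, ZMod.natCast_val, ZMod.natCast_val, ZMod.cast_id, ZMod.cast_id] at h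
  rw [h, Nat.cast_add, add_div, AddCircle.coe_add]
  rfl

lemma two_ne_zero' (p : ℕ) [Fact p.Prime] (hodd : Odd p) : (2 : ZMod p) ≠ 0 := by
  have hp := (Fact.out : p.Prime)
  intro h
  have h2 : p ∣ 2 := (ZMod.natCast_eq_zero_iff 2 p).1 (by exact_mod_cast h)
  have := (Nat.prime_dvd_prime_iff_eq hp Nat.prime_two).1 h2
  subst this
  exact absurd (Nat.odd_iff.1 hodd) (by norm_num)

lemma half_cast (p : ℕ) [Fact p.Prime] (hodd : Odd p) (v : ℕ) :
    ((v * (v-1) / 2 : ℕ) : ZMod p) = (v : ZMod p) * ((v : ZMod p) - 1) * (2 : ZMod p)⁻¹ := by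
  have h2 : (2 : ZMod p) ≠ 0 := two_ne_zero' p hodd
  rcases Nat.eq_zero_or_pos v with rfl | hv
  · simp
  · have he : 2 ∣ v * (v - 1) := by
      obtain ⟨w, rfl⟩ := Nat.exists_eq_add_of_le hv
      have : Even ((1 + w) * (1 + w - 1)) := by
        simpa [Nat.add_sub_cancel_left, mul_comm, add_comm] using Nat.even_mul_succ_self w
      exact this.two_dvd
    have hc : (v * (v-1) / 2 : ℕ) * 2 = v * (v - 1) := Nat.div_mul_cancel he
    have hcast : ((v * (v-1) / 2 : ℕ) : ZMod p) * 2 = (v : ZMod p) * ((v : ZMod p) - 1) := by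
      have := congrArg (Nat.cast : ℕ → ZMod p) hc
      push_cast [Nat.cast_sub hv] at this
      exact this
    field_simp
    exact hcast

lemma f₂_eq (p : ℕ) [Fact p.Prime] (hodd : Odd p) (g h : Heis p) :
    f₂ p g h = qmap p (g.t * (g.t - 1) * (2 : ZMod p)⁻¹ * h.s + (g.t * h.s + g.u) * h.t) := by
  unfold f₂
  rw [← qmap_nat]
  congr 1
  push_cast [half_cast p hodd]
  simp [ZMod.natCast_val, ZMod.cast_id]

end Heis

/-- For an odd prime `p` and `G = E_p(p³)`, the map
`f₂(a^{s₁}b^{t₁}c^{u₁}, a^{s₂}b^{t₂}c^{u₂}) = (t₁(t₁−1)/2·s₂ + (t₁s₂ + u₁)t₂)/p mod ℤ`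
is a 2-cocycle on `G` with values in `ℚ/ℤ` (trivial `G`-action). -/
theorem f₂_isTwoCocycle (p : ℕ) (hp : p.Prime) (hodd : Odd p) :
    IsTwoCocycle (Heis.f₂ p) := by
  haveI : Fact p.Prime := ⟨hp⟩
  haveI : NeZero p := ⟨hp.ne_zero⟩
  have h2 : (2 : ZMod p) * (2 : ZMod p)⁻¹ = 1 :=
    mul_inv_cancel₀ (Heis.two_ne_zero' p hodd)
  intro g₁ g₂ g₃
  rw [Heis.f₂_eq p hodd, Heis.f₂_eq p hodd, Heis.f₂_eq p hodd, Heis.f₂_eq p hodd,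
    ← Heis.qmap_add, ← Heis.qmap_add]
  congr 1
  simp only [Heis.mul_def]
  set i2 := (2 : ZMod p)⁻¹
  linear_combination (g₁.t * g₂.t * g₃.s) * h2
end

section
/- Let p be an odd prime, G = E_p(p^3), and let f₁, f₂ be the 2-cocycles generating H²(G, Q/Z) ≅ (Z/pZ)^2. For the subgroup H₀' = ⟨a, c⟩ ≅ (C_p)², the kernel of the restriction map H²(G, Q/Z) → H²(H₀', Q/Z) is the subgroup generated by the class of f₂, which is cyclic of order p. -/
/-- For an odd prime `p`, `G = E_p(p³)` and the subgroup
`H₀' = ⟨a, c⟩ ≅ (C_p)²`, the kernel of the restriction map `H²(G, ℚ/ℤ) → H²(H₀', ℚ/ℤ)` is the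
subgroup generated by the class of `f₂`, cyclic of order `p`: a class `l·[f₁] + m·[f₂]`
(and every class has this form) restricts to zero on `H₀'` if and only if `l = 0`. -/
theorem ker_restriction_H₀' (p : ℕ) (hp : p.Prime) (hodd : Odd p)
    (f : Heis p → Heis p → QZ) (hf : IsTwoCocycle f) (l m : ZMod p)
    (hlm : IsTwoCoboundary
      (fun g h => f g h - (l.val • Heis.f₁ p g h + m.val • Heis.f₂ p g h))) :
    IsTwoCoboundary
        (fun x y : (Subgroup.closure {Heis.a, Heis.c} : Subgroup (Heis p)) =>
          f (x : Heis p) (y : Heis p)) ↔ l = 0 := by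
  haveI : NeZero p := ⟨hp.ne_zero⟩
  haveI : Fact (1 < p) := ⟨hp.one_lt⟩
  obtain ⟨φ, hφ⟩ := hlm
  -- every element of the closure has t = 0
  have ht : ∀ x : Heis p, x ∈ Subgroup.closure {Heis.a, Heis.c} → x.t = 0 := by
    intro x hx
    induction hx using Subgroup.closure_induction with
    | mem x hx =>
        rcases hx with h | h
        · rw [h]; rfl
        · rw [h]; rfl
    | one => rfl
    | mul x y hx hy ihx ihy =>
        show x.t + y.t = 0
        rw [ihx, ihy, add_zero]
    | inv x hx ih =>
        show -x.t = 0
        rw [ih, neg_zero]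
  -- f₂ vanishes when the first argument has t = 0 and second has t = 0
  have hf2 : ∀ x y : Heis p, x.t = 0 → y.t = 0 → Heis.f₂ p x y = 0 := by
    intro x y hx hy
    unfold Heis.f₂
    rw [hx, hy, ZMod.val_zero]
    norm_num
  -- f₁ vanishes when the first argument has t = 0 and u = 0
  have hf1a : ∀ y : Heis p, Heis.f₁ p Heis.a y = 0 := by
    intro y
    unfold Heis.f₁
    show ((((0 : ZMod p).val * y.s.val + (0 : ZMod p).val * _ : ℕ) : ℚ) / (p:ℚ) : QZ) = 0
    rw [ZMod.val_zero]
    norm_num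
  have hca : (Heis.c : Heis p) * Heis.a = Heis.a * Heis.c := by
    ext <;> simp [Heis.a, Heis.c]
  have hF : Heis.f₁ p Heis.c Heis.a = ((1 / (p:ℚ) : ℚ) : QZ) := by
    unfold Heis.f₁
    show ((((1 : ZMod p).val * (1 : ZMod p).val
        + (0 : ZMod p).val * _ : ℕ) : ℚ) / (p:ℚ) : QZ) = _
    rw [ZMod.val_one, ZMod.val_zero]
    norm_num
  have hta : Heis.a.t = (0 : ZMod p) := rfl
  have htc : Heis.c.t = (0 : ZMod p) := rfl
  have haH : Heis.a ∈ Subgroup.closure ({Heis.a, Heis.c} : Set (Heis p)) :=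
    Subgroup.subset_closure (by simp)
  have hcH : Heis.c ∈ Subgroup.closure ({Heis.a, Heis.c} : Set (Heis p)) :=
    Subgroup.subset_closure (by simp)
  constructor
  · rintro ⟨χ, hχ⟩
    -- evaluate at (c,a) and (a,c)
    have e1 := hφ Heis.c Heis.a
    have e2 := hφ Heis.a Heis.c
    simp only at e1 e2
    rw [hf2 _ _ htc hta, smul_zero, add_zero, hca] at e1
    rw [hf2 _ _ hta htc, smul_zero, add_zero, hf1a, smul_zero, sub_zero] at e2
    have e3 := hχ ⟨Heis.c, hcH⟩ ⟨Heis.a, haH⟩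
    have e4 := hχ ⟨Heis.a, haH⟩ ⟨Heis.c, hcH⟩
    have hmulH : (⟨Heis.c, hcH⟩ * ⟨Heis.a, haH⟩ :
        (Subgroup.closure {Heis.a, Heis.c} : Subgroup (Heis p)))
        = ⟨Heis.a, haH⟩ * ⟨Heis.c, hcH⟩ := by
      apply Subtype.ext
      exact hca
    rw [hmulH] at e3
    simp only at e3 e4
    -- combine
    have h5 : f Heis.c Heis.a - l.val • Heis.f₁ p Heis.c Heis.a = f Heis.a Heis.c := by
      rw [e1, e2]; abel
    have h6 : f Heis.c Heis.a = f Heis.a Heis.c := by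
      rw [e3, e4]; abel
    rw [h6, sub_eq_self] at h5
    rw [hF, ← AddCircle.coe_nsmul] at h5
    rw [AddCircle.coe_eq_zero_iff] at h5
    obtain ⟨n, hn⟩ := h5
    have hp0 : (0:ℚ) < (p:ℚ) := by exact_mod_cast hp.pos
    have hn' : (n : ℚ) = (l.val : ℚ) / (p:ℚ) := by
      simp only [zsmul_eq_mul, nsmul_eq_mul, mul_one] at hn
      push_cast at hn
      rw [mul_one_div] at hn
      exact hn
    have h0n : (0:ℚ) ≤ (n:ℚ) := by
      rw [hn']; positivity
    have h1n : (n:ℚ) < 1 := by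
      rw [hn', div_lt_one hp0]
      exact_mod_cast ZMod.val_lt l
    have : n = 0 := by
      have h0 : (0:ℤ) ≤ n := by exact_mod_cast h0n
      have h1 : n < 1 := by exact_mod_cast h1n
      omega
    rw [this] at hn'
    have : (l.val : ℚ) = 0 := by
      field_simp at hn'
      simpa using hn'.symm
    have : l.val = 0 := by exact_mod_cast this
    exact (ZMod.val_eq_zero l).mp this
  · intro hl
    refine ⟨fun x => φ (x : Heis p), ?_⟩
    rintro ⟨x, hx⟩ ⟨y, hy⟩
    have := hφ x y
    simp only at this ⊢
    rw [hl, ZMod.val_zero, zero_smul, hf2 _ _ (ht x hx) (ht y hy), smul_zero,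
      add_zero, sub_zero] at this
    exact this
end

section
/- Let p be an odd prime, G = E_p(p^3), and H a subgroup of order p with H ≠ Z(G). Then there exists a normal subgroup H' of G with G/H' abelian and H' ∩ H = {1}; consequently the restriction map Hom(G, Q/Z) → Hom(H, Q/Z) is surjective. -/
namespace HeisAux

open Heis

variable {p : ℕ}

/-- Projection to the `s`-coordinate, as a monoid hom. -/
def projS : Heis p →* Multiplicative (ZMod p) where
  toFun g := Multiplicative.ofAdd g.s
  map_one' := rfl
  map_mul' _ _ := rfl

/-- Projection to the `t`-coordinate, as a monoid hom. -/
def projT : Heis p →* Multiplicative (ZMod p) where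
  toFun g := Multiplicative.ofAdd g.t
  map_one' := rfl
  map_mul' _ _ := rfl

lemma mem_center_iff (g : Heis p) :
    g ∈ Subgroup.center (Heis p) ↔ g.s = 0 ∧ g.t = 0 := by
  rw [Subgroup.mem_center_iff]
  constructor
  · intro h
    have h1 := h (Heis.a)
    have h2 := h (Heis.b)
    simp only [Heis.a, Heis.b, Heis.mul_def] at h1 h2
    constructor
    · have := congrArg Heis.u h2
      simpa using this
    · have := congrArg Heis.u h1
      simpa using this
  · rintro ⟨hs, ht⟩ h
    simp [Heis.mul_def, hs, ht, add_comm]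

/-- The center as an explicit equiv with `ZMod p`. -/
noncomputable def centerEquiv : Subgroup.center (Heis p) ≃ ZMod p where
  toFun g := g.1.u
  invFun u := ⟨⟨0, 0, u⟩, by rw [mem_center_iff]; exact ⟨rfl, rfl⟩⟩
  left_inv g := by
    have h := (mem_center_iff g.1).1 g.2
    ext <;> simp [h.1, h.2]
  right_inv u := rfl

lemma card_center : Nat.card (Subgroup.center (Heis p)) = p := by
  rw [Nat.card_congr centerEquiv, Nat.card_zmod]

/-- Helper: `m • v = n • v` for naturals congruent mod `p`, when `p • v = 0`. -/
lemma nsmul_congr {A : Type*} [AddCommGroup A] {v : A} (hv : p • v = 0)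
    {m n : ℕ} (h : (m : ZMod p) = n) : m • v = n • v := by
  have hmod : m % p = n % p := (ZMod.natCast_eq_natCast_iff m n p).1 h
  have key : ∀ k : ℕ, k • v = (k % p) • v := by
    intro k
    conv_lhs => rw [← Nat.div_add_mod k p]
    rw [add_nsmul, mul_nsmul, hv, smul_zero, zero_add]
  rw [key m, key n, hmod]

/-- The key construction: given a character `f : Heis p → ZMod p` not vanishing on a
generator `x` of `H`, both conclusions follow with `H' = ker f`. -/
lemma key (p : ℕ) (hp : p.Prime) (H : Subgroup (Heis p)) (hcard : Nat.card H = p)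
    (f : Heis p →* Multiplicative (ZMod p)) (x : Heis p) (hxH : x ∈ H) (hx1 : x ≠ 1)
    (hfx : f x ≠ 1) :
    (∃ H' : Subgroup (Heis p), H'.Normal ∧ commutator (Heis p) ≤ H' ∧ H' ⊓ H = ⊥) ∧
    ∀ φ : H →* Multiplicative (AddCircle (1 : ℚ)),
      ∃ ψ : Heis p →* Multiplicative (AddCircle (1 : ℚ)), ∀ h : H, ψ (h : Heis p) = φ h := by
  haveI : Fact p.Prime := ⟨hp⟩
  haveI : Finite H := Nat.finite_of_card_ne_zero (by rw [hcard]; exact hp.pos.ne')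
  set xh : H := ⟨x, hxH⟩ with hxh
  have hxh1 : xh ≠ 1 := by
    intro h; apply hx1; exact congrArg Subtype.val h
  have ho : orderOf xh = p := by
    have hdvd : orderOf xh ∣ p := by
      have := orderOf_dvd_natCard xh; rwa [hcard] at this
    rcases (Nat.Prime.eq_one_or_self_of_dvd hp _ hdvd) with h | h
    · exact absurd (orderOf_eq_one_iff.1 h) hxh1
    · exact h
  have hoG : orderOf x = p := by
    have h2 := orderOf_injective H.subtype Subtype.val_injective xh
    exact h2.trans ho
  -- every element of H is a z-power of x
  have hzp : ∀ y : H, ∃ n : ℤ, xh ^ n = y := by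
    intro y
    have htop : Subgroup.zpowers xh = ⊤ := by
      apply Subgroup.eq_top_of_card_eq
      rw [Nat.card_zpowers, ho, hcard]
    have : y ∈ Subgroup.zpowers xh := htop ▸ Subgroup.mem_top _
    exact this
  have hofx : orderOf (f x) = p := by
    have hdvd : orderOf (f x) ∣ p := by
      have := orderOf_map_dvd f x; rwa [hoG] at this
    rcases (Nat.Prime.eq_one_or_self_of_dvd hp _ hdvd) with h | h
    · exact absurd (orderOf_eq_one_iff.1 h) hfx
    · exact h
  constructor
  · refine ⟨f.ker, f.normal_ker, ?_, ?_⟩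
    · rw [commutator_def, Subgroup.commutator_le]
      intro g _ h _
      simp only [MonoidHom.mem_ker, commutatorElement_def, map_mul, map_inv]
      rw [mul_comm (f g) (f h)]
      group
    · rw [eq_bot_iff]
      rintro y ⟨hk, hy⟩
      obtain ⟨n, hn⟩ := hzp ⟨y, hy⟩
      have hyx : x ^ n = y := congrArg Subtype.val hn
      have hfy : (f x) ^ n = 1 := by
        rw [← map_zpow, hyx]; exact hk
      have hpn : ((p : ℕ) : ℤ) ∣ n := by
        rw [← hofx]; exact orderOf_dvd_iff_zpow_eq_one.2 hfy
      have : x ^ n = 1 := orderOf_dvd_iff_zpow_eq_one.1 (by rw [hoG]; exact hpn)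
      rw [hyx] at this
      simp [this]
  · intro φ
    set v : AddCircle (1 : ℚ) := Multiplicative.toAdd (φ xh) with hvdef
    have hv : p • v = 0 := by
      have : (φ xh) ^ p = 1 := by
        have hxp : xh ^ p = 1 := orderOf_dvd_iff_pow_eq_one.1 ho.dvd
        rw [← map_pow, hxp, map_one]
      have := congrArg Multiplicative.toAdd this
      simpa [hvdef] using this
    have hfp : (zmultiplesHom (AddCircle (1 : ℚ)) v) (p : ℤ) = 0 := by
      simp only [zmultiplesHom_apply, natCast_zsmul]
      exact hv
    set k₀ : ZMod p →+ AddCircle (1 : ℚ) :=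
      ZMod.lift p ⟨zmultiplesHom (AddCircle (1 : ℚ)) v, hfp⟩ with hk₀
    set α : ZMod p := Multiplicative.toAdd (f x) with hα
    have hα0 : α ≠ 0 := by
      intro h; apply hfx
      have : Multiplicative.toAdd (f x) = Multiplicative.toAdd (1 : Multiplicative (ZMod p)) := h
      exact Multiplicative.toAdd.injective this
    set K : ZMod p →+ AddCircle (1 : ℚ) := k₀.comp (AddMonoidHom.mulLeft α⁻¹) with hK
    refine ⟨(AddMonoidHom.toMultiplicative K).comp f, ?_⟩
    have hψx : ((AddMonoidHom.toMultiplicative K).comp f) x = φ xh := by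
      show Multiplicative.ofAdd (K (Multiplicative.toAdd (f x))) = φ xh
      rw [hK]
      simp only [AddMonoidHom.coe_comp, Function.comp_apply, AddMonoidHom.coe_mulLeft]
      rw [inv_mul_cancel₀ hα0]
      have h1 : ((1 : ℤ) : ZMod p) = (1 : ZMod p) := by push_cast; rfl
      rw [hk₀, ← h1, ZMod.lift_coe]
      simp [hvdef]
    intro h
    obtain ⟨n, hn⟩ := hzp h
    have hh : xh ^ n = h := hn
    calc ((AddMonoidHom.toMultiplicative K).comp f) (h : Heis p)
        = ((AddMonoidHom.toMultiplicative K).comp f) ((x : Heis p) ^ n) := by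
          rw [← hh]; norm_cast
      _ = (((AddMonoidHom.toMultiplicative K).comp f) x) ^ n := map_zpow _ _ _
      _ = (φ xh) ^ n := by rw [hψx]
      _ = φ (xh ^ n) := (map_zpow _ _ _).symm
      _ = φ h := by rw [hh]

end HeisAux

/-- For an odd prime `p`, `G = E_p(p³)` and `H ≤ G` of order `p` with
`H ≠ Z(G)`, there is a normal subgroup `H' ⊴ G` with `G/H'` abelian (i.e. `[G,G] ≤ H'`) and
`H' ∩ H = {1}`; consequently the restriction map `Hom(G, ℚ/ℤ) → Hom(H, ℚ/ℤ)` is surjective. -/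
theorem exists_normal_complement_and_char_restriction_surjective
    (p : ℕ) (hp : p.Prime) (hodd : Odd p) (H : Subgroup (Heis p))
    (hcard : Nat.card H = p) (hne : H ≠ Subgroup.center (Heis p)) :
    (∃ H' : Subgroup (Heis p), H'.Normal ∧ commutator (Heis p) ≤ H' ∧ H' ⊓ H = ⊥) ∧
    ∀ φ : H →* Multiplicative (AddCircle (1 : ℚ)),
      ∃ ψ : Heis p →* Multiplicative (AddCircle (1 : ℚ)), ∀ h : H, ψ (h : Heis p) = φ h := by
  haveI : Fact p.Prime := ⟨hp⟩
  haveI : Finite H := Nat.finite_of_card_ne_zero (by rw [hcard]; exact hp.pos.ne')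
  obtain ⟨x, hxH, hx1⟩ : ∃ x ∈ H, x ≠ 1 := by
    by_contra hc
    push_neg at hc
    have hbot : H = ⊥ := by rw [Subgroup.eq_bot_iff_forall]; exact hc
    rw [hbot, Subgroup.card_bot] at hcard
    exact hp.one_lt.ne hcard
  by_cases hs : x.s ≠ 0
  · exact HeisAux.key p hp H hcard HeisAux.projS x hxH hx1
      (by simpa [HeisAux.projS] using hs)
  by_cases ht : x.t ≠ 0
  · exact HeisAux.key p hp H hcard HeisAux.projT x hxH hx1
      (by simpa [HeisAux.projT] using ht)
  · exfalso
    push_neg at hs ht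
    have hxc : x ∈ Subgroup.center (Heis p) := (HeisAux.mem_center_iff x).2 ⟨hs, ht⟩
    have ho : orderOf x = p := by
      have hdvd : orderOf (⟨x, hxH⟩ : H) ∣ p := by
        have := orderOf_dvd_natCard (⟨x, hxH⟩ : H); rwa [hcard] at this
      have h2 := orderOf_injective H.subtype Subtype.val_injective (⟨x, hxH⟩ : H)
      rcases hp.eq_one_or_self_of_dvd _ hdvd with h | h
      · exact absurd (congrArg Subtype.val (orderOf_eq_one_iff.1 h)) hx1
      · exact h2.trans h
    have hzH : Subgroup.zpowers x = H := by
      apply Subgroup.eq_of_le_of_card_ge (Subgroup.zpowers_le.2 hxH)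
      rw [hcard, Nat.card_zpowers, ho]
    have hle : H ≤ Subgroup.center (Heis p) := by
      rw [← hzH]; exact Subgroup.zpowers_le.2 hxc
    haveI : Finite (Subgroup.center (Heis p)) :=
      Nat.finite_of_card_ne_zero (by rw [HeisAux.card_center]; exact hp.pos.ne')
    apply hne
    apply Subgroup.eq_of_le_of_card_ge hle
    rw [hcard, HeisAux.card_center]
end
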